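/- arXiv:2605.30371 — 6 statements merged into one kernel-verified Lean document; each statement's English description precedes it below -/
import Mathlib

section
/- The Neumann Rayleigh quotient infimum satisfies lim_{h → 0⁺} R(h) = −max_{x ∈ [α,β]} σ(x). (Semiclassical limit of the principal eigenvalue: λ̃₁(h) → −max σ as h → 0.) -/
open MeasureTheory Set Filter Topology

/-- The Neumann Rayleigh quotient infimum
`R(h) = inf { (h² ∫ φ′² − ∫ σ φ²) / ∫ φ² : φ ∈ C¹, ∫ φ² > 0 }`
for the Schrödinger operator `−h²Δ − σ` on `[α,β]`. -/
noncomputable def rayleighInf (α β : ℝ) (σ : ℝ → ℝ) (h : ℝ) : ℝ :=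
  sInf { r : ℝ | ∃ φ : ℝ → ℝ, ContDiff ℝ 1 φ ∧ (0 < ∫ x in α..β, φ x ^ 2) ∧
    r = (h ^ 2 * (∫ x in α..β, deriv φ x ^ 2) - ∫ x in α..β, σ x * φ x ^ 2) /
        ∫ x in α..β, φ x ^ 2 }

/-- Semiclassical limit of the principal eigenvalue:
`R(h) → −max_{[α,β]} σ` as `h → 0⁺`. -/
theorem rayleighInf_tendsto_neg_max
    (α β : ℝ) (hαβ : α < β) (σ : ℝ → ℝ) (hσ : Continuous σ) :
    Tendsto (fun h : ℝ => rayleighInf α β σ h) (𝓝[>] (0:ℝ))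
      (𝓝 (-(sSup (σ '' Icc α β)))) := by
  set M := sSup (σ '' Icc α β) with hMdef
  obtain ⟨x₀, hx₀, hmax⟩ := isCompact_Icc.exists_isMaxOn (nonempty_Icc.mpr hαβ.le)
    hσ.continuousOn
  have hMx : σ x₀ = M := by
    refine (IsGreatest.csSup_eq ⟨mem_image_of_mem σ hx₀, ?_⟩).symm
    rintro y ⟨x, hx, rfl⟩
    exact hmax hx
  have hσle : ∀ x ∈ Icc α β, σ x ≤ M := fun x hx => hMx ▸ hmax hx
  -- lower bound for every element of the Rayleigh set
  have hlowS : ∀ h : ℝ, ∀ r ∈ { r : ℝ | ∃ φ : ℝ → ℝ, ContDiff ℝ 1 φ ∧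
      (0 < ∫ x in α..β, φ x ^ 2) ∧
      r = (h ^ 2 * (∫ x in α..β, deriv φ x ^ 2) - ∫ x in α..β, σ x * φ x ^ 2) /
        ∫ x in α..β, φ x ^ 2 }, -M ≤ r := by
    rintro h r ⟨φ, hφ, hCpos, rfl⟩
    have hφc : Continuous φ := hφ.continuous
    have hB : (∫ x in α..β, σ x * φ x ^ 2) ≤ M * ∫ x in α..β, φ x ^ 2 := by
      rw [← intervalIntegral.integral_const_mul]
      refine intervalIntegral.integral_mono_on hαβ.le ?_ ?_ ?_
      · exact ((hσ.mul (hφc.pow 2)).intervalIntegrable _ _)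
      · exact ((continuous_const.mul (hφc.pow 2)).intervalIntegrable _ _)
      · intro x hx
        exact mul_le_mul_of_nonneg_right (hσle x hx) (sq_nonneg _)
    have hA : 0 ≤ ∫ x in α..β, deriv φ x ^ 2 :=
      intervalIntegral.integral_nonneg hαβ.le fun x _ => sq_nonneg _
    rw [le_div_iff₀ hCpos]
    nlinarith [sq_nonneg h, mul_nonneg (sq_nonneg h) hA]
  have hne : ∀ h : ℝ, Set.Nonempty { r : ℝ | ∃ φ : ℝ → ℝ, ContDiff ℝ 1 φ ∧
      (0 < ∫ x in α..β, φ x ^ 2) ∧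
      r = (h ^ 2 * (∫ x in α..β, deriv φ x ^ 2) - ∫ x in α..β, σ x * φ x ^ 2) /
        ∫ x in α..β, φ x ^ 2 } := by
    intro h
    refine ⟨_, fun _ => (1:ℝ), contDiff_const, ?_, rfl⟩
    simpa using sub_pos.mpr hαβ
  have hlow : ∀ h : ℝ, -M ≤ rayleighInf α β σ h := fun h =>
    le_csInf (hne h) (hlowS h)
  rw [tendsto_order]
  constructor
  · intro a ha
    filter_upwards with h
    exact lt_of_lt_of_le ha (hlow h)
  · intro a ha
    have hε : (0:ℝ) < (a + M) / 2 := by linarith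
    set ε := (a + M) / 2 with hεdef
    obtain ⟨δ, hδpos, hδ⟩ := Metric.continuousAt_iff.mp hσ.continuousAt ε hε
    set f : ContDiffBump x₀ := ⟨δ / 2, δ, by positivity, by linarith⟩ with hf
    set φ : ℝ → ℝ := fun x => f x with hφdef
    have hφc : Continuous φ := f.continuous
    have hφcd : ContDiff ℝ 1 φ := f.contDiff
    have hdc : Continuous (deriv φ) := hφcd.continuous_deriv le_rfl
    set A := ∫ x in α..β, deriv φ x ^ 2 with hAdef
    set B := ∫ x in α..β, σ x * φ x ^ 2 with hBdef
    set C := ∫ x in α..β, φ x ^ 2 with hCdef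
    have hA : 0 ≤ A := intervalIntegral.integral_nonneg hαβ.le fun x _ => sq_nonneg _
    -- C > 0
    set c := max α (x₀ - δ / 2) with hcdef
    set d := min β (x₀ + δ / 2) with hddef
    have hαc : α ≤ c := le_max_left _ _
    have hdβ : d ≤ β := min_le_left _ _
    have hcd : c < d := by
      rcases hx₀ with ⟨h1, h2⟩
      apply max_lt <;> [skip; skip] <;> apply lt_min <;> linarith
    have hone : ∀ x ∈ Icc c d, φ x = 1 := by
      intro x hx
      apply f.one_of_mem_closedBall
      rw [Metric.mem_closedBall, Real.dist_eq]
      rcases hx with ⟨h1, h2⟩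
      have : x₀ - δ / 2 ≤ x := le_trans (le_max_right _ _) h1
      have : x ≤ x₀ + δ / 2 := le_trans h2 (min_le_right _ _)
      rw [abs_le]; constructor <;> simp only [hf] <;> linarith
    have hint : ∀ u v : ℝ, IntervalIntegrable (fun x => φ x ^ 2) volume u v :=
      fun u v => ((hφc.pow 2).intervalIntegrable _ _)
    have hmid : (∫ x in c..d, φ x ^ 2) = d - c := by
      rw [intervalIntegral.integral_congr (g := fun _ => (1:ℝ))
        (fun x hx => by rw [uIcc_of_le hcd.le] at hx; rw [hone x hx, one_pow])]
      simp
    have hCsplit : C = (∫ x in α..c, φ x ^ 2) + (∫ x in c..d, φ x ^ 2)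
        + ∫ x in d..β, φ x ^ 2 := by
      rw [hCdef, ← intervalIntegral.integral_add_adjacent_intervals (hint α c) (hint c β),
        ← intervalIntegral.integral_add_adjacent_intervals (hint c d) (hint d β), add_assoc]
    have hCpos : 0 < C := by
      have h1 : 0 ≤ ∫ x in α..c, φ x ^ 2 :=
        intervalIntegral.integral_nonneg hαc fun x _ => sq_nonneg _
      have h2 : 0 ≤ ∫ x in d..β, φ x ^ 2 :=
        intervalIntegral.integral_nonneg hdβ fun x _ => sq_nonneg _
      rw [hCsplit, hmid]
      linarith
    -- B bound
    have hB : (M - ε) * C ≤ B := by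
      rw [hCdef, ← intervalIntegral.integral_const_mul]
      refine intervalIntegral.integral_mono_on hαβ.le
        ((continuous_const.mul (hφc.pow 2)).intervalIntegrable _ _)
        ((hσ.mul (hφc.pow 2)).intervalIntegrable _ _) ?_
      intro x hx
      by_cases hx0 : φ x = 0
      · simp [hx0]
      · have hxs : x ∈ Function.support φ := hx0
        rw [show Function.support φ = Metric.ball x₀ f.rOut from f.support_eq] at hxs
        have : dist x x₀ < δ := by simpa [hf] using hxs
        have := hδ this
        rw [Real.dist_eq, abs_lt] at this
        have hσx : M - ε ≤ σ x := by rw [← hMx]; linarith [this.1]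
        exact mul_le_mul_of_nonneg_right hσx (sq_nonneg _)
    -- smallness of h
    set t := Real.sqrt (ε * C / (A + 1)) with htdef
    have htpos : 0 < t := Real.sqrt_pos.mpr (by positivity)
    filter_upwards [Ioo_mem_nhdsGT_of_mem (Set.mem_Ico.mpr ⟨le_refl 0, htpos⟩)] with h hh
    obtain ⟨hh0, hht⟩ := hh
    have ht2 : t ^ 2 = ε * C / (A + 1) := Real.sq_sqrt (by positivity)
    have hh2 : h ^ 2 < ε * C / (A + 1) := by
      rw [← ht2]
      exact pow_lt_pow_left₀ hht hh0.le (by norm_num)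
    have hhA : h ^ 2 * A < ε * C := by
      have h1 : h ^ 2 * (A + 1) < ε * C / (A + 1) * (A + 1) :=
        mul_lt_mul_of_pos_right hh2 (by linarith)
      rw [div_mul_cancel₀ _ (by linarith : A + (1:ℝ) ≠ 0)] at h1
      nlinarith [sq_nonneg h]
    have hmem : (h ^ 2 * A - B) / C ∈ { r : ℝ | ∃ φ : ℝ → ℝ, ContDiff ℝ 1 φ ∧
        (0 < ∫ x in α..β, φ x ^ 2) ∧
        r = (h ^ 2 * (∫ x in α..β, deriv φ x ^ 2) - ∫ x in α..β, σ x * φ x ^ 2) /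
          ∫ x in α..β, φ x ^ 2 } := ⟨φ, hφcd, hCpos, rfl⟩
    have hle : rayleighInf α β σ h ≤ (h ^ 2 * A - B) / C :=
      csInf_le ⟨-M, hlowS h⟩ hmem
    have hra : (h ^ 2 * A - B) / C < a := by
      rw [div_lt_iff₀ hCpos]
      have : h ^ 2 * A - B < ε * C - (M - ε) * C := by linarith
      have h2ε : ε * C - (M - ε) * C = a * C := by rw [hεdef]; ring
      linarith
    exact lt_of_le_of_lt hle hra
end

section
/- Let x₀ ∈ (α,β) and for h > 0 define the Gaussian quasimode φ_h(x) := exp(−(x − x₀)²/(2h)). Then the Rayleigh quotient of φ_h converges to −σ(x₀): (h² ∫_α^β φ_h'(x)² dx − ∫_α^β σ(x) φ_h(x)² dx) / ∫_α^β φ_h(x)² dx → −σ(x₀) as h → 0⁺. In particular, if x₀ is an interior global maximizer of σ on [α,β], then limsup_{h→0⁺} R(h) ≤ −max_{[α,β]} σ. -/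
/-!
The square of `φ_h` is the Gaussian weight `w_h(x) = exp(-(x - x₀)² / h)` and
`h² φ_h'² = (x - x₀)² w_h`, so the Rayleigh quotient of `φ_h` is the `w_h`-average of
`(x - x₀)² - σ` over `[α, β]`. Since `x₀` is interior, the mass of `w_h` is at least
`2c exp(-c² / h)` for small `c`, while `w_h ≤ exp(-r² / h)` off the `r`-ball; for `c < r` the
normalized weights are therefore peak functions at `x₀`, and the average tends to `-σ(x₀)`.
For the limsup, `φ_h` is an admissible test function for `R(h)`, and `-max σ` bounds all
Rayleigh quotients from below, so the `sInf` defining `R(h)` is a genuine infimum.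
-/

open MeasureTheory Set Filter Topology

noncomputable def gaussianWeight (x₀ h x : ℝ) : ℝ := Real.exp (-(x - x₀) ^ 2 / h)

noncomputable def gaussianQuasimode (x₀ h x : ℝ) : ℝ := Real.exp (-(x - x₀) ^ 2 / (2 * h))

noncomputable def rayleighQuotient (α β : ℝ) (σ φ : ℝ → ℝ) (h : ℝ) : ℝ :=
  (h ^ 2 * (∫ x in α..β, deriv φ x ^ 2) - ∫ x in α..β, σ x * φ x ^ 2) / ∫ x in α..β, φ x ^ 2

section GaussianWeight

variable {α β x₀ h : ℝ}

lemma continuous_gaussianWeight (x₀ h : ℝ) : Continuous (gaussianWeight x₀ h) := by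
  unfold gaussianWeight; fun_prop

lemma integral_gaussianWeight_pos (hαβ : α < β) : 0 < ∫ x in α..β, gaussianWeight x₀ h x :=
  intervalIntegral.intervalIntegral_pos_of_pos
    ((continuous_gaussianWeight x₀ h).intervalIntegrable _ _) (fun _ => Real.exp_pos _) hαβ

lemma mul_exp_le_integral_gaussianWeight {c : ℝ} (hc : 0 ≤ c) (hα : α ≤ x₀ - c)
    (hβ : x₀ + c ≤ β) (hh : 0 ≤ h) :
    2 * c * Real.exp (-c ^ 2 / h) ≤ ∫ x in α..β, gaussianWeight x₀ h x := by
  have hle : x₀ - c ≤ x₀ + c := by linarith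
  calc 2 * c * Real.exp (-c ^ 2 / h) = ∫ _ in (x₀ - c)..(x₀ + c), Real.exp (-c ^ 2 / h) := by
        rw [intervalIntegral.integral_const, smul_eq_mul]; ring
    _ ≤ ∫ x in (x₀ - c)..(x₀ + c), gaussianWeight x₀ h x := by
        refine intervalIntegral.integral_mono_on hle (by simp)
          ((continuous_gaussianWeight x₀ h).intervalIntegrable _ _) fun x hx => ?_
        have : (x - x₀) ^ 2 ≤ c ^ 2 := by nlinarith [hx.1, hx.2]
        exact Real.exp_le_exp.2 (by gcongr)
    _ ≤ ∫ x in α..β, gaussianWeight x₀ h x :=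
        intervalIntegral.integral_mono_interval hα hle hβ
          (Eventually.of_forall fun _ => (Real.exp_pos _).le)
          ((continuous_gaussianWeight x₀ h).intervalIntegrable _ _)

lemma gaussianWeight_div_integral_le {c r x : ℝ} (hc : 0 < c) (hα : α ≤ x₀ - c)
    (hβ : x₀ + c ≤ β) (hh : 0 < h) (hx : r ^ 2 ≤ (x - x₀) ^ 2) :
    gaussianWeight x₀ h x / (∫ y in α..β, gaussianWeight x₀ h y) ≤
      Real.exp ((c ^ 2 - r ^ 2) / h) / (2 * c) := by
  have hw : gaussianWeight x₀ h x ≤ Real.exp (-r ^ 2 / h) := Real.exp_le_exp.2 (by gcongr)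
  calc gaussianWeight x₀ h x / (∫ y in α..β, gaussianWeight x₀ h y)
      ≤ Real.exp (-r ^ 2 / h) / (2 * c * Real.exp (-c ^ 2 / h)) :=
        div_le_div₀ (Real.exp_pos _).le hw (by positivity)
          (mul_exp_le_integral_gaussianWeight hc.le hα hβ hh.le)
    _ = Real.exp ((c ^ 2 - r ^ 2) / h) / (2 * c) := by
        rw [show (c ^ 2 - r ^ 2) / h = -r ^ 2 / h - -c ^ 2 / h by ring, Real.exp_sub]
        field_simp

lemma tendsto_exp_div_nhdsGT_zero {a : ℝ} (ha : a < 0) :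
    Tendsto (fun h : ℝ => Real.exp (a / h)) (𝓝[>] 0) (𝓝 0) :=
  Real.tendsto_exp_atBot.comp (tendsto_inv_nhdsGT_zero.const_mul_atTop_of_neg ha)

lemma tendstoUniformlyOn_gaussianWeight_div_integral (hx₀ : x₀ ∈ Ioo α β) {r : ℝ} (hr : 0 < r) :
    TendstoUniformlyOn
      (fun h x => gaussianWeight x₀ h x / ∫ y in α..β, gaussianWeight x₀ h y) 0 (𝓝[>] 0)
      {x | r ≤ |x - x₀|} := by
  obtain ⟨c, hc, hcm⟩ :=
    exists_between (lt_min (lt_min (sub_pos.2 hx₀.1) (sub_pos.2 hx₀.2)) hr)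
  simp only [lt_min_iff] at hcm
  obtain ⟨⟨hα, hβ⟩, hcr⟩ := hcm
  have hbound :
      Tendsto (fun h : ℝ => Real.exp ((c ^ 2 - r ^ 2) / h) / (2 * c)) (𝓝[>] 0) (𝓝 0) := by
    simpa using (tendsto_exp_div_nhdsGT_zero (by nlinarith : c ^ 2 - r ^ 2 < 0)).div_const (2 * c)
  rw [Metric.tendstoUniformlyOn_iff]
  intro ε hε
  filter_upwards [self_mem_nhdsWithin, hbound.eventually (gt_mem_nhds hε)]
    with h (hh : 0 < h) hεh x (hx : r ≤ |x - x₀|)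
  have hpos : 0 ≤ gaussianWeight x₀ h x / ∫ y in α..β, gaussianWeight x₀ h y :=
    div_nonneg (Real.exp_pos _).le (integral_gaussianWeight_pos (hx₀.1.trans hx₀.2)).le
  have hsq : r ^ 2 ≤ (x - x₀) ^ 2 := by simpa only [sq_abs] using pow_le_pow_left₀ hr.le hx 2
  rw [Pi.zero_apply, dist_zero_left, Real.norm_of_nonneg hpos]
  exact (gaussianWeight_div_integral_le hc (by linarith) (by linarith) hh hsq).trans_lt hεh

lemma tendsto_integral_gaussianWeight_mul_div {g : ℝ → ℝ} (hx₀ : x₀ ∈ Ioo α β)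
    (hg : ContinuousOn g (Icc α β)) :
    Tendsto (fun h => (∫ x in α..β, gaussianWeight x₀ h x * g x) /
      ∫ x in α..β, gaussianWeight x₀ h x) (𝓝[>] 0) (𝓝 (g x₀)) := by
  have hαβ : α < β := hx₀.1.trans hx₀.2
  have hpeak := tendsto_setIntegral_peak_smul_of_integrableOn_of_tendsto (μ := volume)
    measurableSet_Ioc measurableSet_Ioc subset_rfl self_mem_nhdsWithin measure_Ioc_lt_top.ne
    (φ := fun h x => gaussianWeight x₀ h x / ∫ y in α..β, gaussianWeight x₀ h y)
    (Eventually.of_forall fun h x _ =>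
      div_nonneg (Real.exp_pos _).le (integral_gaussianWeight_pos hαβ).le)
    (fun u hu hx₀u => by
      obtain ⟨r, hr, hru⟩ := Metric.isOpen_iff.1 hu x₀ hx₀u
      refine (tendstoUniformlyOn_gaussianWeight_div_integral hx₀ hr).mono fun x hx => ?_
      by_contra hxr
      exact hx.2 (hru (by rwa [Metric.mem_ball, Real.dist_eq, ← not_le])))
    (tendsto_const_nhds.congr fun h => by
      rw [integral_div, ← intervalIntegral.integral_of_le hαβ.le,
        div_self (integral_gaussianWeight_pos hαβ).ne'])
    (Eventually.of_forall fun h =>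
      ((continuous_gaussianWeight x₀ h).div_const _).aestronglyMeasurable)
    ((hg.integrableOn_Icc).mono_set Ioc_subset_Icc_self)
    ((hg.continuousWithinAt (Ioo_subset_Icc_self hx₀)).mono Ioc_subset_Icc_self)
  refine hpeak.congr fun h => ?_
  simp only [smul_eq_mul, div_mul_eq_mul_div]
  rw [integral_div, ← intervalIntegral.integral_of_le hαβ.le]

end GaussianWeight

section GaussianQuasimode

variable {α β : ℝ} {σ : ℝ → ℝ}

lemma sq_gaussianQuasimode (x₀ h x : ℝ) : gaussianQuasimode x₀ h x ^ 2 = gaussianWeight x₀ h x := by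
  rw [gaussianQuasimode, gaussianWeight, ← Real.exp_nat_mul]
  ring_nf

lemma hasDerivAt_gaussianQuasimode (x₀ h x : ℝ) :
    HasDerivAt (gaussianQuasimode x₀ h) (-(x - x₀) / h * gaussianQuasimode x₀ h x) x := by
  have hexponent : HasDerivAt (fun y => -(y - x₀) ^ 2 / (2 * h)) (-(2 * (x - x₀)) / (2 * h)) x := by
    simpa using (((hasDerivAt_id x).sub_const x₀).pow 2).neg.div_const (2 * h)
  exact hexponent.exp.congr_deriv (by rw [gaussianQuasimode]; ring)

lemma contDiff_gaussianQuasimode (x₀ h : ℝ) {n : WithTop ℕ∞} :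
    ContDiff ℝ n (gaussianQuasimode x₀ h) := by
  unfold gaussianQuasimode; fun_prop

lemma rayleighQuotient_gaussianQuasimode (hσ : IntervalIntegrable σ volume α β) {x₀ h : ℝ}
    (hh : h ≠ 0) :
    rayleighQuotient α β σ (gaussianQuasimode x₀ h) h =
      (∫ x in α..β, gaussianWeight x₀ h x * ((x - x₀) ^ 2 - σ x)) /
        ∫ x in α..β, gaussianWeight x₀ h x := by
  have hw := continuous_gaussianWeight x₀ h
  have hkinetic : h ^ 2 * (∫ x in α..β, deriv (gaussianQuasimode x₀ h) x ^ 2) =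
      ∫ x in α..β, gaussianWeight x₀ h x * (x - x₀) ^ 2 := by
    rw [← intervalIntegral.integral_const_mul]
    refine intervalIntegral.integral_congr fun x _ => ?_
    rw [(hasDerivAt_gaussianQuasimode x₀ h x).deriv, mul_pow, sq_gaussianQuasimode]
    field_simp
  simp only [rayleighQuotient, hkinetic, sq_gaussianQuasimode]
  rw [← intervalIntegral.integral_sub]
  · congr 1
    exact intervalIntegral.integral_congr fun x _ => by ring
  · exact (hw.mul (by fun_prop)).intervalIntegrable _ _
  · exact hσ.mul_continuousOn hw.continuousOn

lemma tendsto_rayleighQuotient_gaussianQuasimode {x₀ : ℝ} (hx₀ : x₀ ∈ Ioo α β)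
    (hσ : ContinuousOn σ (Icc α β)) :
    Tendsto (fun h => rayleighQuotient α β σ (gaussianQuasimode x₀ h) h) (𝓝[>] 0)
      (𝓝 (-σ x₀)) := by
  have hpeak := tendsto_integral_gaussianWeight_mul_div (g := fun x => (x - x₀) ^ 2 - σ x) hx₀
    ((by fun_prop : Continuous fun x : ℝ => (x - x₀) ^ 2).continuousOn.sub hσ)
  rw [sub_self, zero_pow two_ne_zero, zero_sub] at hpeak
  refine hpeak.congr' ?_
  filter_upwards [self_mem_nhdsWithin] with h (hh : 0 < h)
  exact (rayleighQuotient_gaussianQuasimode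
    (hσ.intervalIntegrable_of_Icc (hx₀.1.trans hx₀.2).le) hh.ne').symm

end GaussianQuasimode

section RayleighInf

variable {α β h M : ℝ} {σ φ : ℝ → ℝ}

lemma neg_le_rayleighQuotient (hαβ : α ≤ β) (hσ : ContinuousOn σ (Icc α β))
    (hM : ∀ x ∈ Icc α β, σ x ≤ M) (hφ : Continuous φ) (hpos : 0 < ∫ x in α..β, φ x ^ 2) :
    -M ≤ rayleighQuotient α β σ φ h := by
  have hkinetic : 0 ≤ h ^ 2 * ∫ x in α..β, deriv φ x ^ 2 :=
    mul_nonneg (sq_nonneg h) (intervalIntegral.integral_nonneg hαβ fun x _ => sq_nonneg _)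
  have hpotential : ∫ x in α..β, σ x * φ x ^ 2 ≤ M * ∫ x in α..β, φ x ^ 2 := by
    rw [← intervalIntegral.integral_const_mul]
    refine intervalIntegral.integral_mono_on hαβ
      ((hσ.mul (hφ.pow 2).continuousOn).intervalIntegrable_of_Icc hαβ)
      ((hφ.pow 2).const_smul M |>.intervalIntegrable _ _) fun x hx => ?_
    exact mul_le_mul_of_nonneg_right (hM x hx) (sq_nonneg _)
  rw [rayleighQuotient, le_div_iff₀ hpos]
  linarith

lemma neg_le_rayleighInf (hαβ : α < β) (hσ : ContinuousOn σ (Icc α β))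
    (hM : ∀ x ∈ Icc α β, σ x ≤ M) : -M ≤ rayleighInf α β σ h := by
  have hone : (0 : ℝ) < ∫ _ in α..β, (1 : ℝ) ^ 2 := by simpa using hαβ
  refine le_csInf ⟨_, fun _ => 1, contDiff_const, hone, rfl⟩ ?_
  rintro _ ⟨φ, hφ, hpos, rfl⟩
  exact neg_le_rayleighQuotient hαβ.le hσ hM hφ.continuous hpos

lemma rayleighInf_le_rayleighQuotient (hαβ : α ≤ β) (hσ : ContinuousOn σ (Icc α β))
    (hφ : ContDiff ℝ 1 φ) (hpos : 0 < ∫ x in α..β, φ x ^ 2) :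
    rayleighInf α β σ h ≤ rayleighQuotient α β σ φ h := by
  obtain ⟨M, hM⟩ := isCompact_Icc.bddAbove_image hσ
  refine csInf_le ⟨-M, ?_⟩ ⟨φ, hφ, hpos, rfl⟩
  rintro _ ⟨ψ, hψ, hψpos, rfl⟩
  exact neg_le_rayleighQuotient hαβ hσ (fun x hx => hM (mem_image_of_mem σ hx)) hψ.continuous
    hψpos

end RayleighInf

/-- Gaussian quasimode: the Rayleigh quotient of `φ_h(x) = exp(−(x−x₀)²/(2h))` converges
to `−σ(x₀)` as `h → 0⁺`; in particular, if `x₀` is an interior global maximizer of `σ`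
on `[α,β]`, then `limsup_{h→0⁺} R(h) ≤ −max_{[α,β]} σ`. -/
theorem rayleigh_quotient_gaussian_quasimode
    (α β : ℝ) (hαβ : α < β) (σ : ℝ → ℝ) (hσ : Continuous σ)
    (x₀ : ℝ) (hx₀ : x₀ ∈ Ioo α β) :
    Tendsto (fun h : ℝ =>
        (h ^ 2 * (∫ x in α..β,
            deriv (fun y => Real.exp (-(y - x₀) ^ 2 / (2 * h))) x ^ 2) -
          ∫ x in α..β, σ x * Real.exp (-(x - x₀) ^ 2 / (2 * h)) ^ 2) /
        ∫ x in α..β, Real.exp (-(x - x₀) ^ 2 / (2 * h)) ^ 2)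
      (𝓝[>] (0:ℝ)) (𝓝 (-σ x₀)) ∧
    ((∀ x ∈ Icc α β, σ x ≤ σ x₀) →
      Filter.limsup (fun h : ℝ => rayleighInf α β σ h) (𝓝[>] (0:ℝ)) ≤
        -(sSup (σ '' Icc α β))) := by
  have hquot := tendsto_rayleighQuotient_gaussianQuasimode hx₀ hσ.continuousOn
  refine ⟨hquot, fun hmax => ?_⟩
  have hsup : sSup (σ '' Icc α β) = σ x₀ :=
    IsGreatest.csSup_eq ⟨mem_image_of_mem σ (Ioo_subset_Icc_self hx₀), forall_mem_image.2 hmax⟩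
  rw [hsup, ← hquot.limsup_eq]
  refine limsup_le_limsup (Eventually.of_forall fun h => ?_)
    (isCoboundedUnder_le_of_le _ fun h => neg_le_rayleighInf hαβ hσ.continuousOn hmax)
    hquot.isBoundedUnder_le
  refine rayleighInf_le_rayleighQuotient hαβ.le hσ.continuousOn (contDiff_gaussianQuasimode x₀ h) ?_
  simpa only [sq_gaussianQuasimode] using integral_gaussianWeight_pos hαβ
end

section
/- Let M := max_{x ∈ [α,β]} σ(x) and K := {x ∈ [α,β] : σ(x) = M} be the set of global maximizers. Let (h_n) be a sequence of positive reals with h_n → 0, (λ_n) a sequence of reals with λ_n → −M, and (φ_n) a sequence of twice continuously differentiable functions φ_n : ℝ → ℝ, strictly positive on [α,β], satisfying −h_n² φ_n''(x) − σ(x) φ_n(x) = λ_n φ_n(x) for all x ∈ [α,β] and φ_n'(α) = φ_n'(β) = 0. Then for every compact set U ⊆ [α,β] with U ∩ K = ∅, the normalized mass on U vanishes: (∫_U φ_n(x)² dx) / (∫_α^β φ_n(x)² dx) → 0 as n → ∞. (Semiclassical concentration: the L² mass of the principal eigenfunction concentrates on the set of global maximizers of σ as h → 0.) -/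
open MeasureTheory Set Filter Topology

/-- Semiclassical concentration: if `h_n → 0`, `λ_n → −M` with `M = max_{[α,β]} σ`, and
`(λ_n, φ_n)` are Neumann eigenpairs of `−h_n²Δ − σ` with strictly positive eigenfunctions,
then for every compact `U ⊆ [α,β]` avoiding the set `K` of global maximizers of `σ`,
the normalized mass `(∫_U φ_n²)/(∫_α^β φ_n²)` tends to `0`. -/
theorem semiclassical_concentration
    (α β : ℝ) (hαβ : α < β) (σ : ℝ → ℝ) (hσ : Continuous σ)
    (M : ℝ) (hM : M = sSup (σ '' Icc α β))
    (K : Set ℝ) (hK : K = {x ∈ Icc α β | σ x = M})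
    (h : ℕ → ℝ) (hhpos : ∀ n, 0 < h n) (hh0 : Tendsto h atTop (𝓝 0))
    (lam : ℕ → ℝ) (hlam : Tendsto lam atTop (𝓝 (-M)))
    (φ : ℕ → ℝ → ℝ) (hφ : ∀ n, ContDiff ℝ 2 (φ n))
    (hφpos : ∀ n, ∀ x ∈ Icc α β, 0 < φ n x)
    (heig : ∀ n, ∀ x ∈ Icc α β,
      -(h n) ^ 2 * deriv (deriv (φ n)) x - σ x * φ n x = lam n * φ n x)
    (hbcα : ∀ n, deriv (φ n) α = 0) (hbcβ : ∀ n, deriv (φ n) β = 0)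
    (U : Set ℝ) (hUcomp : IsCompact U) (hUsub : U ⊆ Icc α β) (hUK : U ∩ K = ∅) :
    Tendsto (fun n => (∫ x in U, φ n x ^ 2) / ∫ x in α..β, φ n x ^ 2)
      atTop (𝓝 0) := by
  rcases U.eq_empty_or_nonempty with hUe | hUne
  · simp [hUe, tendsto_const_nhds]
  -- basic regularity facts
  have hcont : ∀ n, Continuous (φ n) := fun n => (hφ n).continuous
  have hd1 : ∀ n, Differentiable ℝ (φ n) := fun n =>
    (hφ n).differentiable (by norm_num)
  have hφ' : ∀ n, ContDiff ℝ 1 (deriv (φ n)) := fun n => by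
    have := (contDiff_succ_iff_deriv (n := 1)).mp (by exact_mod_cast hφ n)
    exact this.2.2
  have hcont' : ∀ n, Continuous (deriv (φ n)) := fun n => (hφ' n).continuous
  have hd2 : ∀ n, Differentiable ℝ (deriv (φ n)) := fun n =>
    (hφ' n).differentiable (by norm_num)
  have hcont'' : ∀ n, Continuous (deriv (deriv (φ n))) := fun n => by
    have := (contDiff_succ_iff_deriv (n := 0)).mp (by exact_mod_cast hφ' n)
    exact this.2.2.continuous
  -- bounds on σ
  have hbdd : BddAbove (σ '' Icc α β) :=
    (isCompact_Icc.image hσ).bddAbove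
  have hle : ∀ x ∈ Icc α β, σ x ≤ M := fun x hx => by
    rw [hM]; exact le_csSup hbdd (mem_image_of_mem σ hx)
  -- the gap δ on U
  obtain ⟨x₀, hx₀U, hx₀max⟩ := hUcomp.exists_isMaxOn hUne hσ.continuousOn
  have hx₀lt : σ x₀ < M := by
    rcases lt_or_eq_of_le (hle x₀ (hUsub hx₀U)) with hlt | heq
    · exact hlt
    · exfalso
      have : x₀ ∈ U ∩ K := ⟨hx₀U, by rw [hK]; exact ⟨hUsub hx₀U, heq⟩⟩
      simp [hUK] at this
  set δ := M - σ x₀ with hδdef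
  have hδpos : 0 < δ := sub_pos.mpr hx₀lt
  have hUσ : ∀ x ∈ U, σ x ≤ M - δ := fun x hx => by
    have h1 : σ x ≤ σ x₀ := hx₀max hx
    simp only [hδdef]; linarith
  -- energy identity: 0 ≤ ∫ (σ + lam n) φ²
  have energy : ∀ n, 0 ≤ ∫ x in α..β, (σ x + lam n) * φ n x ^ 2 := by
    intro n
    have hI1 : IntervalIntegrable (deriv (φ n)) volume α β :=
      (hcont' n).intervalIntegrable α β
    have hI2 : IntervalIntegrable (deriv (deriv (φ n))) volume α β :=
      (hcont'' n).intervalIntegrable α β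
    have ibp := intervalIntegral.integral_mul_deriv_eq_deriv_mul
      (u := φ n) (v := deriv (φ n)) (u' := deriv (φ n)) (v' := deriv (deriv (φ n)))
      (fun x _ => (hd1 n x).hasDerivAt) (fun x _ => (hd2 n x).hasDerivAt) hI1 hI2
    rw [hbcα n, hbcβ n] at ibp
    simp only [mul_zero, zero_sub, sub_self] at ibp
    have hEq : ∀ x ∈ Icc α β, (σ x + lam n) * φ n x ^ 2
        = -(h n) ^ 2 * (φ n x * deriv (deriv (φ n)) x) := by
      intro x hx
      have e : -(h n) ^ 2 * deriv (deriv (φ n)) x = (σ x + lam n) * φ n x := by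
        linarith [heig n x hx]
      calc (σ x + lam n) * φ n x ^ 2 = ((σ x + lam n) * φ n x) * φ n x := by ring
        _ = (-(h n) ^ 2 * deriv (deriv (φ n)) x) * φ n x := by rw [e]
        _ = -(h n) ^ 2 * (φ n x * deriv (deriv (φ n)) x) := by ring
    have hcongr : (∫ x in α..β, (σ x + lam n) * φ n x ^ 2)
        = ∫ x in α..β, -(h n) ^ 2 * (φ n x * deriv (deriv (φ n)) x) := by
      apply intervalIntegral.integral_congr
      intro x hx
      exact hEq x (by rwa [uIcc_of_le hαβ.le] at hx)
    rw [hcongr, intervalIntegral.integral_const_mul, ibp]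
    have : (0:ℝ) ≤ ∫ x in α..β, deriv (φ n) x * deriv (φ n) x := by
      apply intervalIntegral.integral_nonneg hαβ.le
      intro x _; exact mul_self_nonneg _
    nlinarith [sq_nonneg (h n)]
  -- positivity of the denominator
  have hIpos : ∀ n, 0 < ∫ x in α..β, φ n x ^ 2 := by
    intro n
    exact intervalIntegral.intervalIntegral_pos_of_pos_on
      (((hcont n).pow 2).intervalIntegrable α β)
      (fun x hx => pow_pos (hφpos n x (Ioo_subset_Icc_self hx)) 2) hαβ
  have hUmeas : MeasurableSet U := hUcomp.measurableSet
  have hJnonneg : ∀ n, 0 ≤ ∫ x in U, φ n x ^ 2 := fun n =>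
    setIntegral_nonneg hUmeas (fun x _ => sq_nonneg _)
  -- main estimate
  rw [NormedAddCommGroup.tendsto_nhds_zero]
  intro ε hε
  set c := min (δ / 2) (ε * δ / 4) with hcdef
  have hcpos : 0 < c := lt_min (by linarith) (by positivity)
  have hev : ∀ᶠ n in atTop, lam n < -M + c :=
    hlam.eventually (eventually_lt_nhds (by linarith : -M < -M + c))
  filter_upwards [hev] with n hn
  -- set integrals
  set Jn := ∫ x in U, φ n x ^ 2 with hJ
  set In := ∫ x in α..β, φ n x ^ 2 with hIn
  have hIcc : In = ∫ x in Icc α β, φ n x ^ 2 := by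
    rw [hIn, intervalIntegral.integral_of_le hαβ.le, integral_Icc_eq_integral_Ioc]
  have hintg : IntegrableOn (fun x => (σ x + lam n) * φ n x ^ 2) (Icc α β) :=
    ((hσ.add continuous_const).mul ((hcont n).pow 2)).integrableOn_Icc
  have hintφ2 : IntegrableOn (fun x => φ n x ^ 2) (Icc α β) :=
    ((hcont n).pow 2).integrableOn_Icc
  have hsplit : (∫ x in Icc α β, (σ x + lam n) * φ n x ^ 2)
      = (∫ x in U, (σ x + lam n) * φ n x ^ 2)
        + ∫ x in Icc α β \ U, (σ x + lam n) * φ n x ^ 2 := by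
    rw [← setIntegral_union disjoint_sdiff_right (measurableSet_Icc.diff hUmeas)
      (hintg.mono_set hUsub) (hintg.mono_set diff_subset),
      Set.union_diff_cancel hUsub]
  -- bound the two pieces
  have hb1 : (∫ x in U, (σ x + lam n) * φ n x ^ 2) ≤ -(δ / 2) * Jn := by
    rw [hJ, ← integral_const_mul]
    apply setIntegral_mono_on (hintg.mono_set hUsub)
      ((hintφ2.mono_set hUsub).const_mul _) hUmeas
    intro x hx
    have h1 : σ x + lam n ≤ -(δ / 2) := by
      have := hUσ x hx
      have hc : c ≤ δ / 2 := min_le_left _ _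
      linarith
    have h2 : 0 ≤ φ n x ^ 2 := sq_nonneg _
    nlinarith
  have hb2 : (∫ x in Icc α β \ U, (σ x + lam n) * φ n x ^ 2) ≤ c * In := by
    have step1 : (∫ x in Icc α β \ U, (σ x + lam n) * φ n x ^ 2)
        ≤ ∫ x in Icc α β \ U, c * φ n x ^ 2 := by
      apply setIntegral_mono_on (hintg.mono_set diff_subset)
        ((hintφ2.mono_set diff_subset).const_mul _) (measurableSet_Icc.diff hUmeas)
      intro x hx
      have h1 : σ x + lam n ≤ c := by
        have := hle x hx.1; linarith
      nlinarith [sq_nonneg (φ n x)]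
    have step2 : (∫ x in Icc α β \ U, c * φ n x ^ 2) ≤ c * In := by
      rw [hIcc, ← integral_const_mul]
      apply setIntegral_mono_set (hintφ2.const_mul c) ?_ (HasSubset.Subset.eventuallyLE diff_subset)
      filter_upwards with x
      positivity
    linarith
  have henergy : (0:ℝ) ≤ ∫ x in Icc α β, (σ x + lam n) * φ n x ^ 2 := by
    have := energy n
    rwa [intervalIntegral.integral_of_le hαβ.le, ← integral_Icc_eq_integral_Ioc] at this
  have hJle : Jn ≤ 2 * c / δ * In := by
    have h1 : δ / 2 * Jn ≤ c * In := by rw [hsplit] at henergy; linarith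
    clear_value Jn In δ c
    rw [div_mul_eq_mul_div, le_div_iff₀ hδpos]
    nlinarith
  have hratio : Jn / In ≤ 2 * c / δ := by
    rw [div_le_iff₀ (hIpos n)]
    exact hJle
  have hcle : 2 * c / δ ≤ ε / 2 := by
    have : c ≤ ε * δ / 4 := min_le_right _ _
    rw [div_le_iff₀ hδpos]
    nlinarith
  have h0 : 0 ≤ Jn / In := div_nonneg (hJnonneg n) (hIpos n).le
  have : Jn / In < ε := lt_of_le_of_lt (hratio.trans hcle) (by linarith)
  calc ‖Jn / In‖ = Jn / In := by rw [Real.norm_eq_abs, abs_of_nonneg h0]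
    _ < ε := this
end

section
/- Let a, c > 0, λ₁ ∈ ℝ, and let φ₁ : ℝ → ℝ be twice continuously differentiable, strictly positive on [α,β], satisfying −c φ₁''(x) − a σ(x) φ₁(x) = λ₁ φ₁(x) for all x ∈ [α,β] with φ₁'(α) = φ₁'(β) = 0. Then: (i) λ₁ = −a (∫_α^β σ(x) φ₁(x) dx) / (∫_α^β φ₁(x) dx); and (ii) the normalized function u := μ φ₁ with μ := (∫_α^β φ₁(y) dy)^{−1} is a stationary solution of the replicator–mutator equation, i.e., c u''(x) + a (σ(x) − ∫_α^β σ(y) u(y) dy) u(x) = 0 for all x ∈ [α,β], with u'(α) = u'(β) = 0 and ∫_α^β u(x) dx = 1. -/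
open MeasureTheory Set intervalIntegral

/-!
Integrating the eigenvalue equation over `[α, β]` kills the diffusion term, because
`∫ φ'' = φ'(β) - φ'(α) = 0` under Neumann conditions; this leaves `λ₁ ∫ φ₁ = -a ∫ σ φ₁`.
Dividing the eigenvalue equation by `∫ φ₁ > 0` and substituting this value of `λ₁` is
exactly the stationary replicator–mutator equation for `u = φ₁ / ∫ φ₁`.
-/

section NeumannEigenpair

variable {α β a c lam : ℝ} {σ φ : ℝ → ℝ}

theorem integral_deriv_deriv_eq_zero_of_neumann (hφ : ContDiff ℝ 2 φ)
    (hbcα : deriv φ α = 0) (hbcβ : deriv φ β = 0) :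
    ∫ x in α..β, deriv (deriv φ) x = 0 := by
  have hφ' : ContDiff ℝ 1 (deriv φ) := (contDiff_succ_iff_deriv (n := 1)).mp hφ |>.2.2
  rw [integral_deriv_eq_sub (fun x _ => hφ'.differentiable one_ne_zero x)
    ((hφ'.continuous_deriv le_rfl).intervalIntegrable α β), hbcα, hbcβ, sub_zero]

theorem eigenvalue_mul_integral_eq_of_neumann (hαβ : α ≤ β) (hσ : Continuous σ)
    (hφ : ContDiff ℝ 2 φ)
    (heig : ∀ x ∈ Icc α β, -c * deriv (deriv φ) x - a * σ x * φ x = lam * φ x)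
    (hbcα : deriv φ α = 0) (hbcβ : deriv φ β = 0) :
    lam * ∫ x in α..β, φ x = -a * ∫ x in α..β, σ x * φ x := by
  have hφ'' : Continuous (deriv (deriv φ)) :=
    ((contDiff_succ_iff_deriv (n := 1)).mp hφ).2.2.continuous_deriv le_rfl
  have hσφ : Continuous fun x => σ x * φ x := hσ.mul hφ.continuous
  calc lam * ∫ x in α..β, φ x
      = ∫ x in α..β, (-c * deriv (deriv φ) x - a * (σ x * φ x)) := by
        rw [← intervalIntegral.integral_const_mul]
        refine integral_congr fun x hx => ?_
        rw [uIcc_of_le hαβ] at hx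
        simp only [← heig x hx, mul_assoc]
    _ = -c * (∫ x in α..β, deriv (deriv φ) x) - a * ∫ x in α..β, σ x * φ x := by
        rw [integral_sub ((hφ''.intervalIntegrable α β).const_mul _)
          ((hσφ.intervalIntegrable α β).const_mul _),
          intervalIntegral.integral_const_mul, intervalIntegral.integral_const_mul]
    _ = -a * ∫ x in α..β, σ x * φ x := by
        rw [integral_deriv_deriv_eq_zero_of_neumann hφ hbcα hbcβ]; ring

end NeumannEigenpair

theorem principal_eigenfunction_stationary_solution_general
    (α β a c : ℝ) (hαβ : α < β)
    (σ : ℝ → ℝ) (hσ : Continuous σ)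
    (lam : ℝ) (φ : ℝ → ℝ) (hφ : ContDiff ℝ 2 φ)
    (hpos : ∀ x ∈ Icc α β, 0 < φ x)
    (heig : ∀ x ∈ Icc α β, -c * deriv (deriv φ) x - a * σ x * φ x = lam * φ x)
    (hbcα : deriv φ α = 0) (hbcβ : deriv φ β = 0) :
    lam = -a * (∫ x in α..β, σ x * φ x) / ∫ x in α..β, φ x ∧
    (∀ x ∈ Icc α β,
      c * deriv (deriv (fun y => (∫ z in α..β, φ z)⁻¹ * φ y)) x +
        a * (σ x - ∫ y in α..β, σ y * ((∫ z in α..β, φ z)⁻¹ * φ y)) *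
          ((∫ z in α..β, φ z)⁻¹ * φ x) = 0) ∧
    deriv (fun y => (∫ z in α..β, φ z)⁻¹ * φ y) α = 0 ∧
    deriv (fun y => (∫ z in α..β, φ z)⁻¹ * φ y) β = 0 ∧
    (∫ x in α..β, (∫ z in α..β, φ z)⁻¹ * φ x) = 1 := by
  have hmass : 0 < ∫ x in α..β, φ x :=
    intervalIntegral_pos_of_pos_on (hφ.continuous.intervalIntegrable α β)
      (fun x hx => hpos x (Ioo_subset_Icc_self hx)) hαβ
  have hlam : lam = -a * (∫ x in α..β, σ x * φ x) / ∫ x in α..β, φ x := by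
    rw [eq_div_iff hmass.ne',
      eigenvalue_mul_integral_eq_of_neumann hαβ.le hσ hφ heig hbcα hbcβ]
  simp only [deriv_const_mul_field', mul_left_comm (σ _), intervalIntegral.integral_const_mul]
  refine ⟨hlam, fun x hx => ?_, by simp [hbcα], by simp [hbcβ], inv_mul_cancel₀ hmass.ne'⟩
  linear_combination (-(∫ x in α..β, φ x)⁻¹) * heig x hx - (∫ x in α..β, φ x)⁻¹ * φ x * hlam

/-- For a positive principal Neumann eigenpair `(λ₁, φ₁)` of `L = −cΔ − aσ` on `[α,β]`:
(i) `λ₁ = −a (∫ σ φ₁)/(∫ φ₁)`; and (ii) the normalized eigenfunction `u = μ φ₁` with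
`μ = (∫ φ₁)⁻¹` is a stationary solution of the replicator–mutator equation with Neumann
boundary conditions and total mass one. -/
theorem principal_eigenfunction_stationary_solution
    (α β a c : ℝ) (hαβ : α < β) (ha : 0 < a) (hc : 0 < c)
    (σ : ℝ → ℝ) (hσ : Continuous σ)
    (lam : ℝ) (φ : ℝ → ℝ) (hφ : ContDiff ℝ 2 φ)
    (hpos : ∀ x ∈ Icc α β, 0 < φ x)
    (heig : ∀ x ∈ Icc α β, -c * deriv (deriv φ) x - a * σ x * φ x = lam * φ x)
    (hbcα : deriv φ α = 0) (hbcβ : deriv φ β = 0) :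
    lam = -a * (∫ x in α..β, σ x * φ x) / ∫ x in α..β, φ x ∧
    (∀ x ∈ Icc α β,
      c * deriv (deriv (fun y => (∫ z in α..β, φ z)⁻¹ * φ y)) x +
        a * (σ x - ∫ y in α..β, σ y * ((∫ z in α..β, φ z)⁻¹ * φ y)) *
          ((∫ z in α..β, φ z)⁻¹ * φ x) = 0) ∧
    deriv (fun y => (∫ z in α..β, φ z)⁻¹ * φ y) α = 0 ∧
    deriv (fun y => (∫ z in α..β, φ z)⁻¹ * φ y) β = 0 ∧
    (∫ x in α..β, (∫ z in α..β, φ z)⁻¹ * φ x) = 1 :=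
  principal_eigenfunction_stationary_solution_general α β a c hαβ σ hσ lam φ hφ hpos heig hbcα hbcβ
end

section
/- Let u : ℝ → ℝ → ℝ be a classical solution of the replicator–mutator equation on [α,β] with Neumann boundary conditions, with u and its partial derivatives up to the orders appearing in the equation jointly continuous. Define m(t) := ∫_α^β u(t,x) dx and S(t) := ∫_α^β σ(x) u(t,x) dx. Then m is differentiable with m'(t) = a·S(t)·(1 − m(t)) for all t ≥ 0; consequently, if m(0) = 1 then m(t) = 1 for all t ≥ 0 (total mass is conserved, so a probability density stays a probability density). -/
open MeasureTheory Set

/-!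
Differentiating under the integral sign and substituting the equation, the diffusion term
integrates to `c (∂ₓu(t,β) - ∂ₓu(t,α)) = 0` by the Neumann condition, while the selection term
integrates to `a S(t) - a S(t) m(t)`. Hence `m - 1` solves the linear equation
`y' = -a S(t) y`, and multiplying by the integrating factor `exp (∫₀ᵗ a S)` shows that
`m(0) = 1` forces `m ≡ 1`.
-/

theorem hasDerivAt_intervalIntegral_of_continuous_uncurry {E : Type*} [NormedAddCommGroup E]
    [NormedSpace ℝ E] {F F' : ℝ → ℝ → E} {a b t₀ : ℝ}
    (hF : Continuous (Function.uncurry F)) (hF' : Continuous (Function.uncurry F'))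
    (hderiv : ∀ s x, HasDerivAt (fun s => F s x) (F' s x) s) :
    HasDerivAt (fun s => ∫ x in a..b, F s x) (∫ x in a..b, F' t₀ x) t₀ := by
  obtain ⟨C, hC⟩ := (isCompact_Icc.prod isCompact_uIcc :
      IsCompact (Icc (t₀ - 1) (t₀ + 1) ×ˢ uIcc a b)).exists_bound_of_continuousOn
    hF'.continuousOn
  refine (intervalIntegral.hasDerivAt_integral_of_dominated_loc_of_deriv_le
    (bound := fun _ => C) (Icc_mem_nhds (by linarith) (by linarith))
    (Filter.Eventually.of_forall fun s => (hF.uncurry_left s).aestronglyMeasurable)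
    ((hF.uncurry_left t₀).intervalIntegrable a b)
    (hF'.uncurry_left t₀).aestronglyMeasurable
    (Filter.Eventually.of_forall fun x hx s hs => hC (s, x) ⟨hs, uIoc_subset_uIcc hx⟩)
    intervalIntegrable_const
    (Filter.Eventually.of_forall fun x _ s _ => hderiv s x)).2

theorem integral_deriv_deriv_eq_zero {E : Type*} [NormedAddCommGroup E] [NormedSpace ℝ E]
    [CompleteSpace E] {f : ℝ → E} {a b : ℝ} (hf : ContDiff ℝ 2 f) (ha : deriv f a = 0) (hb : deriv f b = 0) :
    ∫ x in a..b, deriv (deriv f) x = 0 := by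
  have hf' : ContDiff ℝ 1 (deriv f) := hf.iterate_deriv' 1 1
  rw [intervalIntegral.integral_deriv_eq_sub
    (fun x _ => (hf'.differentiable one_ne_zero).differentiableAt)
    ((hf'.continuous_deriv le_rfl).intervalIntegrable a b), ha, hb, sub_zero]

theorem integral_replicator_selection_term {σ u : ℝ → ℝ} {a b : ℝ} (k : ℝ)
    (hσu : IntervalIntegrable (fun x => σ x * u x) volume a b)
    (hu : IntervalIntegrable u volume a b) :
    ∫ x in a..b, k * (σ x - ∫ y in a..b, σ y * u y) * u x =
      k * (∫ x in a..b, σ x * u x) * (1 - ∫ x in a..b, u x) := by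
  set S := ∫ y in a..b, σ y * u y
  calc ∫ x in a..b, k * (σ x - S) * u x
      = ∫ x in a..b, (k * (σ x * u x) - k * S * u x) := by
        congr 1; funext x; ring
    _ = k * S - k * S * ∫ x in a..b, u x := by
        rw [intervalIntegral.integral_sub (hσu.const_mul k) (hu.const_mul _),
          intervalIntegral.integral_const_mul, intervalIntegral.integral_const_mul]
    _ = k * S * (1 - ∫ x in a..b, u x) := by ring

theorem integral_replicator_mutator_rhs {σ v : ℝ → ℝ} {a b : ℝ} (c k : ℝ) (hσ : Continuous σ)
    (hv : ContDiff ℝ 2 v) (ha : deriv v a = 0) (hb : deriv v b = 0) :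
    ∫ x in a..b, (c * deriv (deriv v) x + k * (σ x - ∫ y in a..b, σ y * v y) * v x) =
      k * (∫ x in a..b, σ x * v x) * (1 - ∫ x in a..b, v x) := by
  have hdiffusion : IntervalIntegrable (fun x => c * deriv (deriv v) x) volume a b :=
    ((hv.iterate_deriv' 0 2).continuous.const_mul c).intervalIntegrable a b
  have hselection : IntervalIntegrable
      (fun x => k * (σ x - ∫ y in a..b, σ y * v y) * v x) volume a b :=
    (((hσ.sub continuous_const).const_mul k).mul hv.continuous).intervalIntegrable a b
  rw [intervalIntegral.integral_add hdiffusion hselection, intervalIntegral.integral_const_mul,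
    integral_deriv_deriv_eq_zero hv ha hb, mul_zero, zero_add,
    integral_replicator_selection_term k ((hσ.mul hv.continuous).intervalIntegrable a b)
      (hv.continuous.intervalIntegrable a b)]

theorem eq_zero_of_hasDerivAt_eq_mul {y k : ℝ → ℝ} {t₀ t : ℝ} (hk : Continuous k)
    (hy : ∀ s ≥ t₀, HasDerivAt y (k s * y s) s) (hy₀ : y t₀ = 0) (ht : t₀ ≤ t) :
    y t = 0 := by
  set K : ℝ → ℝ := fun t => ∫ s in t₀..t, k s
  have hK : ∀ s, HasDerivAt K (k s) s := fun s =>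
    (hk.integral_hasStrictDerivAt t₀ s).hasDerivAt
  have hdamped : ∀ s ≥ t₀, HasDerivAt (fun t => y t * Real.exp (-K t)) 0 s :=
    fun s hs => ((hy s hs).mul (hK s).neg.exp).congr_deriv (by ring)
  have hconst := constant_of_has_deriv_right_zero (a := t₀) (b := t)
    (fun s hs => (hdamped s hs.1).continuousAt.continuousWithinAt)
    (fun s hs => (hdamped s hs.1).hasDerivWithinAt) t ⟨ht, le_rfl⟩
  rw [hy₀, zero_mul] at hconst
  exact (mul_eq_zero.1 hconst).resolve_right (Real.exp_ne_zero _)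

theorem replicator_mutator_mass_conservation_general
    (α β a c : ℝ) (hαβ : α < β)
    (σ : ℝ → ℝ) (hσ : Continuous σ)
    (u : ℝ → ℝ → ℝ)
    (hu_t : ∀ x, ContDiff ℝ 1 (fun t => u t x))
    (hu_x : ∀ t, ContDiff ℝ 2 (fun x => u t x))
    (hu_cont : Continuous fun p : ℝ × ℝ => u p.1 p.2)
    (hut_cont : Continuous fun p : ℝ × ℝ => deriv (fun s => u s p.2) p.1)
    (hpde : ∀ t ≥ (0:ℝ), ∀ x ∈ Icc α β,
      deriv (fun s => u s x) t =
        c * deriv (deriv (fun y => u t y)) x +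
        a * (σ x - ∫ y in α..β, σ y * u t y) * u t x)
    (hbcα : ∀ t ≥ (0:ℝ), deriv (fun x => u t x) α = 0)
    (hbcβ : ∀ t ≥ (0:ℝ), deriv (fun x => u t x) β = 0) :
    (∀ t ≥ (0:ℝ),
      HasDerivAt (fun s => ∫ x in α..β, u s x)
        (a * (∫ x in α..β, σ x * u t x) * (1 - ∫ x in α..β, u t x)) t) ∧
    ((∫ x in α..β, u 0 x) = 1 → ∀ t ≥ (0:ℝ), (∫ x in α..β, u t x) = 1) := by
  set S : ℝ → ℝ := fun t => ∫ x in α..β, σ x * u t x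
  set m : ℝ → ℝ := fun t => ∫ x in α..β, u t x
  have hm : ∀ t ≥ (0:ℝ), HasDerivAt m (a * S t * (1 - m t)) t := by
    intro t ht
    have hderiv := hasDerivAt_intervalIntegral_of_continuous_uncurry (t₀ := t) (a := α)
      (b := β) (F' := fun s x => deriv (fun s => u s x) s) hu_cont hut_cont
      (fun s x => ((hu_t x).differentiable one_ne_zero s).hasDerivAt)
    rwa [intervalIntegral.integral_congr fun x hx => hpde t ht x (uIcc_of_le hαβ.le ▸ hx),
      integral_replicator_mutator_rhs c a hσ (hu_x t) (hbcα t ht) (hbcβ t ht)] at hderiv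
  refine ⟨hm, fun hm₀ t ht => sub_eq_zero.1 ?_⟩
  have hS : Continuous S :=
    intervalIntegral.continuous_parametric_intervalIntegral_of_continuous'
      ((hσ.comp continuous_snd).mul hu_cont) α β
  refine eq_zero_of_hasDerivAt_eq_mul (y := fun t => m t - 1)
    (k := fun t => -(a * S t)) (hS.const_mul a).neg
    (fun s hs => ((hm s hs).sub_const 1).congr_deriv (by ring)) (sub_eq_zero.2 hm₀) ht

/-- Mass conservation for the replicator–mutator equation: for a classical solution `u`
(with joint continuity of `u` and the relevant partial derivatives), the total mass
`m(t) = ∫_α^β u(t,x) dx` satisfies `m'(t) = a·S(t)·(1 − m(t))` where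
`S(t) = ∫_α^β σ(x) u(t,x) dx`; hence `m(0) = 1` implies `m(t) = 1` for all `t ≥ 0`. -/
theorem replicator_mutator_mass_conservation
    (α β a c : ℝ) (hαβ : α < β) (ha : 0 < a) (hc : 0 < c)
    (σ : ℝ → ℝ) (hσ : Continuous σ)
    (u : ℝ → ℝ → ℝ)
    (hu_t : ∀ x, ContDiff ℝ 1 (fun t => u t x))
    (hu_x : ∀ t, ContDiff ℝ 2 (fun x => u t x))
    (hu_cont : Continuous fun p : ℝ × ℝ => u p.1 p.2)
    (hut_cont : Continuous fun p : ℝ × ℝ => deriv (fun s => u s p.2) p.1)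
    (huxx_cont : Continuous fun p : ℝ × ℝ => deriv (deriv (fun y => u p.1 y)) p.2)
    (hpde : ∀ t ≥ (0:ℝ), ∀ x ∈ Icc α β,
      deriv (fun s => u s x) t =
        c * deriv (deriv (fun y => u t y)) x +
        a * (σ x - ∫ y in α..β, σ y * u t y) * u t x)
    (hbcα : ∀ t ≥ (0:ℝ), deriv (fun x => u t x) α = 0)
    (hbcβ : ∀ t ≥ (0:ℝ), deriv (fun x => u t x) β = 0) :
    (∀ t ≥ (0:ℝ),
      HasDerivAt (fun s => ∫ x in α..β, u s x)
        (a * (∫ x in α..β, σ x * u t x) * (1 - ∫ x in α..β, u t x)) t) ∧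
    ((∫ x in α..β, u 0 x) = 1 → ∀ t ≥ (0:ℝ), (∫ x in α..β, u t x) = 1) :=
  replicator_mutator_mass_conservation_general α β a c hαβ σ hσ u hu_t hu_x hu_cont hut_cont hpde
    hbcα hbcβ
end

section
/- Let u : ℝ → ℝ → ℝ be a classical solution of the replicator–mutator equation on [α,β] with Neumann boundary conditions, with S(t) := ∫_α^β σ(y) u(t,y) dy continuous in t. Define v(t,x) := u(t,x) · exp(a ∫_0^t S(s) ds). Then v satisfies the linear equation: for all t ≥ 0 and x ∈ [α,β], ∂_t v(t,x) = c ∂_xx v(t,x) + a σ(x) v(t,x), with ∂_x v(t,α) = ∂_x v(t,β) = 0. (The exponential integrating-factor transform linearizes the replicator–mutator equation.) -/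
open MeasureTheory Set

/-- The exponential integrating-factor transform linearizes the replicator–mutator
equation: if `u` is a classical solution of the replicator–mutator equation with Neumann
boundary conditions and `S(t) = ∫_α^β σ(y) u(t,y) dy` is continuous, then
`v(t,x) = u(t,x)·exp(a ∫_0^t S(s) ds)` solves the linear equation
`∂ₜ v = c ∂ₓₓ v + a σ v` with the same Neumann conditions. -/
theorem integrating_factor_linearizes_replicator_mutator
    (α β a c : ℝ) (hαβ : α < β) (ha : 0 < a) (hc : 0 < c)
    (σ : ℝ → ℝ) (hσ : Continuous σ)
    (u : ℝ → ℝ → ℝ)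
    (hu_t : ∀ x, ContDiff ℝ 1 (fun t => u t x))
    (hu_x : ∀ t, ContDiff ℝ 2 (fun x => u t x))
    (hS : Continuous fun t => ∫ y in α..β, σ y * u t y)
    (hpde : ∀ t ≥ (0:ℝ), ∀ x ∈ Icc α β,
      deriv (fun s => u s x) t =
        c * deriv (deriv (fun y => u t y)) x +
        a * (σ x - ∫ y in α..β, σ y * u t y) * u t x)
    (hbcα : ∀ t ≥ (0:ℝ), deriv (fun x => u t x) α = 0)
    (hbcβ : ∀ t ≥ (0:ℝ), deriv (fun x => u t x) β = 0) :
    ∀ t ≥ (0:ℝ),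
      (∀ x ∈ Icc α β,
        deriv (fun s => u s x *
            Real.exp (a * ∫ r in (0:ℝ)..s, ∫ y in α..β, σ y * u r y)) t =
          c * deriv (deriv (fun y => u t y *
              Real.exp (a * ∫ r in (0:ℝ)..t, ∫ y' in α..β, σ y' * u r y'))) x +
          a * σ x * (u t x *
            Real.exp (a * ∫ r in (0:ℝ)..t, ∫ y in α..β, σ y * u r y))) ∧
      deriv (fun x => u t x *
          Real.exp (a * ∫ r in (0:ℝ)..t, ∫ y in α..β, σ y * u r y)) α = 0 ∧
      deriv (fun x => u t x *
          Real.exp (a * ∫ r in (0:ℝ)..t, ∫ y in α..β, σ y * u r y)) β = 0 := by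
  set S : ℝ → ℝ := fun t => ∫ y in α..β, σ y * u t y with hSdef
  set E : ℝ → ℝ := fun t => Real.exp (a * ∫ r in (0:ℝ)..t, S r) with hEdef
  -- derivative of E
  have hEderiv : ∀ t, HasDerivAt E (a * S t * E t) t := by
    intro t
    have h1 : HasDerivAt (fun s => ∫ r in (0:ℝ)..s, S r) (S t) t :=
      (hS.integral_hasStrictDerivAt 0 t).hasDerivAt
    have h2 : HasDerivAt (fun s => a * ∫ r in (0:ℝ)..s, S r) (a * S t) t :=
      h1.const_mul a
    simpa [E, mul_comm, mul_assoc, mul_left_comm] using h2.exp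
  -- x-derivatives with constant factor
  have hx_d1 : ∀ t, deriv (fun y => u t y * E t) = fun y => deriv (fun y => u t y) y * E t := by
    intro t
    funext y
    exact deriv_mul_const ((hu_x t).differentiable two_ne_zero).differentiableAt _
  have hx_diff : ∀ t, Differentiable ℝ (deriv (fun y => u t y)) := by
    intro t
    have h2 : ContDiff ℝ (1+1) (fun y => u t y) := by
      simpa [one_add_one_eq_two] using hu_x t
    exact (contDiff_succ_iff_deriv.mp h2).2.2.differentiable one_ne_zero
  have hx_d2 : ∀ t x, deriv (deriv (fun y => u t y * E t)) x
      = deriv (deriv (fun y => u t y)) x * E t := by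
    intro t x
    rw [hx_d1 t]
    exact deriv_mul_const (hx_diff t x) _
  intro t ht
  refine ⟨?_, ?_, ?_⟩
  · intro x hx
    -- time derivative of v
    have hu : HasDerivAt (fun s => u s x) (deriv (fun s => u s x) t) t :=
      (((hu_t x).differentiable one_ne_zero) t).hasDerivAt
    have hv : HasDerivAt (fun s => u s x * E s)
        (deriv (fun s => u s x) t * E t + u t x * (a * S t * E t)) t :=
      hu.mul (hEderiv t)
    have hvd := hv.deriv
    show deriv (fun s => u s x * E s) t =
      c * deriv (deriv (fun y => u t y * E t)) x + a * σ x * (u t x * E t)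
    rw [hvd, hpde t ht x hx, hx_d2 t x]
    ring
  · show deriv (fun y => u t y * E t) α = 0
    rw [hx_d1 t]
    simp [hbcα t ht]
  · show deriv (fun y => u t y * E t) β = 0
    rw [hx_d1 t]
    simp [hbcβ t ht]
end
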